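/- arXiv:1608.02413 — 3 statements merged into one kernel-verified Lean document; each statement's English description precedes it below -/
import Mathlib

section
/- Let W be a word viewed as a sequence of m slots each of k+1 bits, where slot t contains the value 2^k + c − x_t with 0 ≤ x_t, c < 2^k. Then the number of indices t with x_t ≤ c equals the popcount of W AND M, where M is the mask having a 1 exactly at bit position t(k+1)+k for each slot t. In particular parallel subtraction followed by masking and popcount correctly counts the characters ≤ c in a block. -/
/-- Number of set bits of a natural number. -/
def popCount (n : ℕ) : ℕ := (Nat.bits n).count true

lemma popCount_zero : popCount 0 = 0 := by simp [popCount]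

lemma popCount_one : popCount 1 = 1 := by simp [popCount, Nat.one_bits]

lemma popCount_two_mul_add (n r : ℕ) (hr : r < 2) :
    popCount (2 * n + r) = popCount n + r := by
  interval_cases r
  · rcases Nat.eq_zero_or_pos n with h | h
    · simp [h, popCount_zero]
    · rw [Nat.add_zero, popCount, Nat.bit0_bits n (by omega), List.count_cons]
      simp [popCount]
  · rw [popCount, Nat.bit1_bits n, List.count_cons]
    simp [popCount]

lemma popCount_split (n : ℕ) : ∀ a b : ℕ, a < 2 ^ n →
    popCount (2 ^ n * b + a) = popCount b + popCount a := by
  induction n with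
  | zero =>
    intro a b ha
    interval_cases a
    simp [popCount_zero]
  | succ n ih =>
    intro a b ha
    have h1 : 2 ^ (n + 1) * b + a = 2 * (2 ^ n * b + a / 2) + a % 2 := by
      have := Nat.div_add_mod a 2
      ring_nf
      omega
    have h2 : a / 2 < 2 ^ n := by
      have : 2 ^ (n+1) = 2 * 2 ^ n := by ring
      omega
    have h3 : popCount a = popCount (a / 2) + a % 2 := by
      conv_lhs => rw [← Nat.div_add_mod a 2]
      exact popCount_two_mul_add _ _ (Nat.mod_lt _ (by norm_num))
    rw [h1, popCount_two_mul_add _ _ (Nat.mod_lt _ (by norm_num)), ih _ _ h2, h3]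
    omega

lemma land_split (n x y u v : ℕ) (hx : x < 2 ^ n) (hy : y < 2 ^ n) :
    Nat.land (2 ^ n * u + x) (2 ^ n * v + y) = 2 ^ n * Nat.land u v + Nat.land x y := by
  have hxy : x &&& y < 2 ^ n := lt_of_le_of_lt Nat.and_le_left hx
  apply Nat.eq_of_testBit_eq
  intro i
  show Nat.testBit ((2^n*u+x) &&& (2^n*v+y)) i = Nat.testBit (2^n*(u &&& v) + (x &&& y)) i
  simp only [Nat.testBit_and, Nat.testBit_two_pow_mul_add _ hx,
    Nat.testBit_two_pow_mul_add _ hy, Nat.testBit_two_pow_mul_add _ hxy]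
  by_cases h : i < n <;> simp [h, Nat.testBit_and]

lemma sum_lt_pow (k : ℕ) : ∀ (m : ℕ) (b : Fin m → ℕ), (∀ t, b t < 2 ^ (k + 1)) →
    ∑ t : Fin m, b t * 2 ^ ((t : ℕ) * (k + 1)) < 2 ^ (m * (k + 1)) := by
  intro m
  induction m with
  | zero => intro b hb; simp
  | succ m ih =>
    intro b hb
    rw [Fin.sum_univ_castSucc]
    simp only [Fin.coe_castSucc, Fin.val_last]
    have h1 := ih (fun t => b t.castSucc) (fun t => hb _)
    beta_reduce at h1
    have h2 : b (Fin.last m) + 1 ≤ 2 ^ (k + 1) := hb _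
    have h3 : 2 ^ ((m + 1) * (k + 1)) = 2 ^ (m * (k + 1)) * 2 ^ (k + 1) := by
      rw [← pow_add]; ring_nf
    have h4 : b (Fin.last m) * 2 ^ (m * (k + 1)) + 2 ^ (m * (k + 1)) ≤
        2 ^ (m * (k + 1)) * 2 ^ (k + 1) := by
      calc b (Fin.last m) * 2 ^ (m * (k + 1)) + 2 ^ (m * (k + 1))
          = (b (Fin.last m) + 1) * 2 ^ (m * (k + 1)) := by ring
        _ ≤ 2 ^ (k + 1) * 2 ^ (m * (k + 1)) := Nat.mul_le_mul_right _ h2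
        _ = 2 ^ (m * (k + 1)) * 2 ^ (k + 1) := by ring
    omega

lemma key (k c : ℕ) (hc : c < 2 ^ k) : ∀ (m : ℕ) (x : Fin m → ℕ), (∀ t, x t < 2 ^ k) →
    (Finset.univ.filter (fun t : Fin m => x t ≤ c)).card =
      popCount (Nat.land (∑ t : Fin m, (2 ^ k + c - x t) * 2 ^ ((t : ℕ) * (k + 1)))
        (∑ t : Fin m, 2 ^ ((t : ℕ) * (k + 1) + k))) := by
  have hp : (1 : ℕ) ≤ 2 ^ k := Nat.one_le_two_pow
  intro m
  induction m with
  | zero =>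
    intro x hx
    simp [popCount_zero, Nat.land]
  | succ m ih =>
    intro x hx
    have hWlt : (∑ t : Fin m, (2 ^ k + c - x t.castSucc) * 2 ^ ((t : ℕ) * (k + 1)))
        < 2 ^ (m * (k + 1)) := by
      apply sum_lt_pow
      intro t
      have := hx t.castSucc
      have : (2:ℕ) ^ (k+1) = 2 * 2 ^ k := by ring
      omega
    have hMeq : (∑ t : Fin m, 2 ^ ((t : ℕ) * (k + 1) + k))
        = ∑ t : Fin m, 2 ^ k * 2 ^ ((t : ℕ) * (k + 1)) := by
      congr 1; funext t; rw [pow_add]; ring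
    have hMlt : (∑ t : Fin m, 2 ^ ((t : ℕ) * (k + 1) + k)) < 2 ^ (m * (k + 1)) := by
      rw [hMeq]
      apply sum_lt_pow
      intro t
      have : (2:ℕ) ^ (k+1) = 2 * 2 ^ k := by ring
      omega
    set a := 2 ^ k + c - x (Fin.last m) with ha
    set hb := (if x (Fin.last m) ≤ c then 1 else 0) with hhb
    have hxl := hx (Fin.last m)
    have hb01 : hb = 0 ∨ hb = 1 := by rw [hhb]; split_ifs <;> simp
    have hdec : a = 2 ^ k * hb + (a - 2 ^ k * hb) ∧ a - 2 ^ k * hb < 2 ^ k := by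
      rw [ha, hhb]; split_ifs with h <;> constructor <;> omega
    -- compute land a (2^k)
    have e3 : Nat.land a (2 ^ k) = 2 ^ k * hb := by
      have hs := land_split k (a - 2 ^ k * hb) 0 hb 1 hdec.2 (by omega)
      simp only [mul_one, add_zero] at hs
      rw [← hdec.1] at hs
      have l0 : ∀ y : ℕ, Nat.land y 0 = 0 := fun y => Nat.and_zero y
      rcases hb01 with h | h <;> rw [h] at hs ⊢ <;> rw [hs, l0]
      · norm_num
      · norm_num
    rw [Fin.sum_univ_castSucc, Fin.sum_univ_castSucc]
    simp only [Fin.coe_castSucc, Fin.val_last]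
    have e1 : (∑ t : Fin m, (2 ^ k + c - x t.castSucc) * 2 ^ ((t : ℕ) * (k + 1)))
        + a * 2 ^ (m * (k + 1))
        = 2 ^ (m * (k + 1)) * a + ∑ t : Fin m, (2 ^ k + c - x t.castSucc) * 2 ^ ((t : ℕ) * (k + 1)) := by
      ring
    have e2 : (∑ t : Fin m, 2 ^ ((t : ℕ) * (k + 1) + k)) + 2 ^ (m * (k + 1) + k)
        = 2 ^ (m * (k + 1)) * 2 ^ k + ∑ t : Fin m, 2 ^ ((t : ℕ) * (k + 1) + k) := by
      rw [pow_add]; ring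
    rw [e1, e2, land_split _ _ _ _ _ hWlt hMlt, e3]
    have hland : Nat.land (∑ t : Fin m, (2 ^ k + c - x t.castSucc) * 2 ^ ((t : ℕ) * (k + 1)))
        (∑ t : Fin m, 2 ^ ((t : ℕ) * (k + 1) + k)) < 2 ^ (m * (k + 1)) :=
      lt_of_le_of_lt Nat.and_le_left hWlt
    rw [popCount_split _ _ _ hland]
    have hpop : popCount (2 ^ k * hb) = hb := by
      rcases hb01 with h | h <;> rw [h]
      · simp [popCount_zero]
      · have : 2 ^ k * 1 = 2 ^ k * 1 + 0 := by ring
        rw [this, popCount_split k 0 1 (by omega), popCount_one, popCount_zero]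
    have hcard : (Finset.univ.filter (fun t : Fin (m + 1) => x t ≤ c)).card
        = (Finset.univ.filter (fun t : Fin m => x t.castSucc ≤ c)).card + hb := by
      rw [Finset.card_filter, Finset.card_filter, Fin.sum_univ_castSucc, hhb]
    have hih := ih (fun t => x t.castSucc) (fun t => hx _)
    beta_reduce at hih
    omega

/-- Parallel subtraction + mask + popcount counts the characters ≤ c in a block. -/
theorem stmt6 (k m c : ℕ) (x : Fin m → ℕ) (hc : c < 2 ^ k) (hx : ∀ t, x t < 2 ^ k)
    (W M : ℕ)
    (hW : W = ∑ t : Fin m, (2 ^ k + c - x t) * 2 ^ ((t : ℕ) * (k + 1)))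
    (hM : M = ∑ t : Fin m, 2 ^ ((t : ℕ) * (k + 1) + k)) :
    (Finset.univ.filter (fun t : Fin m => x t ≤ c)).card =
      popCount (Nat.land W M) := by
  subst hW hM
  exact key k c hc m x hx
end

section
/- LF-mapping is a bijection: the map i ↦ C(L[i]) + Occ(L[i], i) is a permutation of {1, …, n}, where L is the Burrows–Wheeler transform of a string with a unique sentinel, C(c) counts characters of L smaller than c, and Occ(c, i) counts occurrences of c in L[1..i]. -/
/-- The LF-mapping i ↦ C(L[i]) + Occ(L[i], i) is a bijection from the row
indices onto {1, ..., n}. -/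
theorem stmt8 {Alpha : Type*} [LinearOrder Alpha] (T : List Alpha) (s : Alpha)
    (hTne : T ≠ [])
    (hlast : T.getLast hTne = s)
    (hcount : T.count s = 1)
    (hsmall : ∀ x ∈ T, x ≠ s → s < x)
    (rows : Fin T.length → List Alpha)
    (hmono : StrictMono rows)
    (hrot : ∀ r, ∃ k < T.length, rows r = T.rotate k)
    (hsurj : ∀ k < T.length, ∃ r, rows r = T.rotate k)
    (L : Fin T.length → Alpha)
    (hL : ∀ r, (rows r).getLast? = some (L r))
    (C : Alpha → ℕ)
    (hC : ∀ c, C c = (Finset.univ.filter (fun j : Fin T.length => L j < c)).card)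
    (Occ : Alpha → ℕ → ℕ)
    (hOcc : ∀ c i, Occ c i =
      (Finset.univ.filter (fun j : Fin T.length => (j : ℕ) < i ∧ L j = c)).card) :
    Set.BijOn (fun i : Fin T.length => C (L i) + Occ (L i) ((i : ℕ) + 1))
      Set.univ (Set.Icc 1 T.length) := by
  classical
  let S : Fin T.length → Finset (Fin T.length) := fun i =>
    Finset.univ.filter (fun j => L j < L i ∨ (L j = L i ∧ (j : ℕ) ≤ (i : ℕ)))
  have hfS : ∀ i : Fin T.length, C (L i) + Occ (L i) ((i : ℕ) + 1) = (S i).card := by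
    intro i
    rw [hC, hOcc, ← Finset.card_union_of_disjoint]
    · rw [← Finset.filter_or]
      apply congrArg
      apply Finset.filter_congr
      intro j _
      simp only [Nat.lt_succ_iff]
      constructor
      · rintro (h | ⟨h1, h2⟩)
        · exact Or.inl h
        · exact Or.inr ⟨h2, h1⟩
      · rintro (h | ⟨h1, h2⟩)
        · exact Or.inl h
        · exact Or.inr ⟨h2, h1⟩
    · rw [Finset.disjoint_left]
      intro j hj hj'
      simp only [Finset.mem_filter] at hj hj'
      exact absurd (hj'.2.2 ▸ hj.2) (lt_irrefl _)
  have hmem : ∀ i : Fin T.length, i ∈ S i := by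
    intro i
    simp [S]
  have hlt : ∀ i i' : Fin T.length, (L i < L i' ∨ (L i = L i' ∧ i < i')) →
      (S i).card < (S i').card := by
    intro i i' h
    apply Finset.card_lt_card
    rw [Finset.ssubset_iff_of_subset]
    · refine ⟨i', hmem i', ?_⟩
      intro hcon
      simp only [S, Finset.mem_filter, Finset.mem_univ, true_and] at hcon
      rcases h with h | ⟨h1, h2⟩
      · rcases hcon with hc | ⟨he, _⟩
        · exact absurd (hc.trans h) (lt_irrefl _)
        · exact absurd (he ▸ h) (lt_irrefl _)
      · rcases hcon with hc | ⟨_, hle⟩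
        · exact absurd (h1 ▸ hc) (lt_irrefl _)
        · exact absurd hle (by omega)
    · intro j hj
      simp only [S, Finset.mem_filter, Finset.mem_univ, true_and] at hj ⊢
      rcases h with h | ⟨h1, h2⟩
      · rcases hj with hj | ⟨hj1, _⟩
        · exact Or.inl (hj.trans h)
        · exact Or.inl (hj1 ▸ h)
      · rcases hj with hj | ⟨hj1, hj2⟩
        · exact Or.inl (h1 ▸ hj)
        · exact Or.inr ⟨hj1.trans h1, le_trans hj2 (le_of_lt h2)⟩
  have hinj : Function.Injective (fun i : Fin T.length => (S i).card) := by
    intro i i' h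
    by_contra hne
    rcases lt_trichotomy (L i) (L i') with h1 | h1 | h1
    · exact absurd h (Nat.ne_of_lt (hlt i i' (Or.inl h1)))
    · rcases lt_trichotomy i i' with h2 | h2 | h2
      · exact absurd h (Nat.ne_of_lt (hlt i i' (Or.inr ⟨h1, h2⟩)))
      · exact hne h2
      · exact absurd h.symm (Nat.ne_of_lt (hlt i' i (Or.inr ⟨h1.symm, h2⟩)))
    · exact absurd h.symm (Nat.ne_of_lt (hlt i' i (Or.inl h1)))
  have hbound : ∀ i : Fin T.length, 1 ≤ (S i).card ∧ (S i).card ≤ T.length := by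
    intro i
    constructor
    · exact Finset.card_pos.mpr ⟨i, hmem i⟩
    · calc (S i).card ≤ Finset.univ.card := Finset.card_filter_le _ _
        _ = T.length := by simp
  have himg : Finset.image (fun i : Fin T.length => (S i).card) Finset.univ
      = Finset.Icc 1 T.length := by
    apply Finset.eq_of_subset_of_card_le
    · intro m hm
      rcases Finset.mem_image.mp hm with ⟨i, _, hi⟩
      rw [Finset.mem_Icc]
      exact hi ▸ hbound i
    · rw [Finset.card_image_of_injective _ hinj, Nat.card_Icc]
      simp
  refine ⟨?_, ?_, ?_⟩
  · intro i _
    simp only [Set.mem_Icc]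
    rw [hfS i]
    exact hbound i
  · intro i _ i' _ h
    simp only [hfS] at h
    exact hinj h
  · intro m hm
    rw [Set.mem_Icc] at hm
    have hmem' : m ∈ Finset.Icc 1 T.length := Finset.mem_Icc.mpr hm
    rw [← himg, Finset.mem_image] at hmem'
    rcases hmem' with ⟨i, _, hi⟩
    refine ⟨i, Set.mem_univ i, ?_⟩
    simp only
    rw [hfS i]
    exact hi
end

section
/- The set of rows of the sorted cyclic-rotation matrix of T$ that start with a given pattern P is a contiguous interval of row indices (possibly empty). -/
private lemma lex_head_le {α} [LinearOrder α] {x y : α} {a b : List α}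
    (h : (x :: a) ≤ (y :: b)) : x ≤ y := by
  rcases le_iff_lt_or_eq.mp h with h | h
  · cases h with
    | cons _ => exact le_refl _
    | rel h => exact le_of_lt h
  · injection h with h1 _; exact le_of_eq h1

private lemma lex_tail_le {α} [LinearOrder α] {x : α} {a b : List α}
    (h : (x :: a) ≤ (x :: b)) : a ≤ b := by
  rcases le_iff_lt_or_eq.mp h with h | h
  · cases h with
    | cons h => exact le_of_lt h
    | rel h => exact absurd h (lt_irrefl x)
  · injection h with _ h2; exact le_of_eq h2

private lemma prefix_mid {α} [LinearOrder α] :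
    ∀ (P a b c : List α), P <+: a → P <+: c → a ≤ b → b ≤ c →
      P.length ≤ b.length → P <+: b := by
  intro P
  induction P with
  | nil => intro _ _ _ _ _ _ _ _; exact List.nil_prefix
  | cons x P ih =>
    intro a b c ha hc hab hbc hlen
    obtain ⟨ta, rfl⟩ := ha
    obtain ⟨tc, rfl⟩ := hc
    cases b with
    | nil => simp at hlen
    | cons y tb =>
      have hxy : x ≤ y := lex_head_le hab
      have hyx : y ≤ x := lex_head_le hbc
      have : y = x := le_antisymm hyx hxy
      subst this
      have h1 : (P ++ ta : List α) ≤ tb := lex_tail_le hab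
      have h2 : (tb : List α) ≤ P ++ tc := lex_tail_le hbc
      have := ih (P ++ ta) tb (P ++ tc) (List.prefix_append _ _)
        (List.prefix_append _ _) h1 h2 (by simpa using hlen)
      exact List.cons_prefix_cons.mpr ⟨rfl, this⟩

/-- The rows of the sorted rotation matrix starting with a pattern P form a
contiguous (possibly empty) interval of row indices. -/
theorem stmt12 {Alpha : Type*} [LinearOrder Alpha] (T : List Alpha) (s : Alpha)
    (hTne : T ≠ [])
    (hlast : T.getLast hTne = s)
    (hcount : T.count s = 1)
    (hsmall : ∀ x ∈ T, x ≠ s → s < x)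
    (rows : Fin T.length → List Alpha)
    (hmono : StrictMono rows)
    (hrot : ∀ r, ∃ k < T.length, rows r = T.rotate k)
    (hsurj : ∀ k < T.length, ∃ r, rows r = T.rotate k)
    (P : List Alpha) :
    ∀ r₁ r₂ r₃ : Fin T.length, r₁ ≤ r₂ → r₂ ≤ r₃ →
      P <+: rows r₁ → P <+: rows r₃ → P <+: rows r₂ := by
  intro r₁ r₂ r₃ h12 h23 hp1 hp3
  have len : ∀ r, (rows r).length = T.length := by
    intro r
    obtain ⟨k, _, hk⟩ := hrot r
    simp [hk]
  have hlen : P.length ≤ (rows r₂).length := by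
    rw [len]
    calc P.length ≤ (rows r₁).length := hp1.length_le
      _ = T.length := len r₁
  exact prefix_mid P (rows r₁) (rows r₂) (rows r₃) hp1 hp3
    (hmono.monotone h12) (hmono.monotone h23) hlen
end
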